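/- For every subset J ⊆ {1,…,n} with |J| ≥ 2, all distinct i, j ∈ J, and every λ ∈ K^*, the group commutator [θ_{ij}(J), μ_{J∖j}(λ)] := θ_{ij}(J)·μ_{J∖j}(λ)·θ_{ij}(J)^{-1}·μ_{J∖j}(λ)^{-1} equals μ_J(λ^{-1}) in the group of units of 𝕊_n. -/

import Mathlib

set_option synthInstance.maxHeartbeats 1000000
set_option maxHeartbeats 1600000

open MvPolynomial

namespace SnAlg

noncomputable section

variable (K : Type*) [Field K] [CharZero K] (n : ℕ)

/-- The polynomial algebra `P_n = K[x_1,…,x_n]`. -/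
abbrev Poly := MvPolynomial (Fin n) K

/-- The operator `x_i` : multiplication by the variable `x_i`. -/
def xop (i : Fin n) : Module.End K (Poly K n) := LinearMap.mulLeft K (X i)

/-- The operator `y_i`, the one-sided inverse of `x_i`: it sends the monomial `x^α` to
`x^{α - e_i}` if `α_i > 0` and to `0` otherwise. -/
def yop (i : Fin n) : Module.End K (Poly K n) :=
  (MvPolynomial.basisMonomials (Fin n) K).constr K fun α =>
    if α i = 0 then 0
    else (MvPolynomial.basisMonomials (Fin n) K) (α - Finsupp.single i 1)

/-- The algebra `𝕊_n` of one-sided inverses of `P_n`: the subalgebra of `End_K(P_n)`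
generated by `x_1,…,x_n,y_1,…,y_n`. -/
def Sn : Subalgebra K (Module.End K (Poly K n)) :=
  Algebra.adjoin K (Set.range (xop K n) ∪ Set.range (yop K n))

/-- `x_i` as an element of `𝕊_n`. -/
def Xe (i : Fin n) : Sn K n :=
  ⟨xop K n i, Algebra.subset_adjoin (Set.mem_union_left _ ⟨i, rfl⟩)⟩

/-- `y_i` as an element of `𝕊_n`. -/
def Ye (i : Fin n) : Sn K n :=
  ⟨yop K n i, Algebra.subset_adjoin (Set.mem_union_right _ ⟨i, rfl⟩)⟩

/-- The two-sided ideal `𝔭_i` of `𝕊_n` generated by `1 - x_i y_i`. -/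
def pIdeal (i : Fin n) : TwoSidedIdeal (Sn K n) :=
  TwoSidedIdeal.span {1 - Xe K n i * Ye K n i}

/-- `e_J := ∏_{k ∈ J} (1 - x_k y_k)` (the factors pairwise commute; the product is taken in
increasing order of the indices). -/
def eSet (J : Finset (Fin n)) : Sn K n :=
  ((J.sort (· ≤ ·)).map fun k => 1 - Xe K n k * Ye K n k).prod

/-- `μ_J(a) := a e_J + 1 - e_J`. -/
def mu (J : Finset (Fin n)) (a : Sn K n) : Sn K n :=
  a * eSet K n J + 1 - eSet K n J

/-- `θ_{ij}(J) := μ_{J∖i}(y_i) · μ_{J∖j}(x_j)`. -/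
def theta (J : Finset (Fin n)) (i j : Fin n) : Sn K n :=
  mu K n (J.erase i) (Ye K n i) * mu K n (J.erase j) (Xe K n j)

/-- The factor `E_{kl}(i) = x_i^k y_i^l - x_i^{k+1} y_i^{l+1}`. -/
def Efac (i : Fin n) (k l : ℕ) : Sn K n :=
  Xe K n i ^ k * Ye K n i ^ l - Xe K n i ^ (k + 1) * Ye K n i ^ (l + 1)

/-- `E_{αβ} := ∏_{i=1}^n E_{α_i β_i}(i)`. -/
def Eab (α β : Fin n → ℕ) : Sn K n :=
  ((List.finRange n).map fun i => Efac K n i (α i) (β i)).prod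

/-- `F_n`, the `K`-linear span of all the `E_{αβ}`. -/
def Fn : Submodule K (Sn K n) :=
  Submodule.span K {f | ∃ α β : Fin n → ℕ, f = Eab K n α β}

/-- A `K`-linear map is Fredholm if its kernel and cokernel are finite dimensional. -/
def IsFredholm {V U : Type*} [AddCommGroup V] [Module K V] [AddCommGroup U] [Module K U]
    (f : V →ₗ[K] U) : Prop :=
  FiniteDimensional K (LinearMap.ker f) ∧ FiniteDimensional K (U ⧸ LinearMap.range f)

/-- The index of a (Fredholm) linear map: `dim ker - dim coker`. -/
def fredInd {V U : Type*} [AddCommGroup V] [Module K V] [AddCommGroup U] [Module K U]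
    (f : V →ₗ[K] U) : ℤ :=
  (Module.finrank K (LinearMap.ker f) : ℤ) - (Module.finrank K (U ⧸ LinearMap.range f) : ℤ)

end

/-!
Everything is computed in `End_K(P_n)`, into which `𝕊_n` embeds. Put `p = e_{J∖i}` and
`q = e_{J∖j}`, so that `e_J = p q`. The relations used are: `y_k x_k = 1`; the `e_S` are commuting
idempotents with `e_S e_T = e_{S ∪ T}`; `y_k e_S = 0` for `k ∈ S`; and `x_k, y_k` commute with
`e_S` for `k ∉ S`. From them, `θ_{ij}(J) θ_{ji}(J) = 1` and `θ_{ij}(J) q θ_{ji}(J) = q - p q`.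
Hence conjugating `μ_q(λ) = 1 + (λ - 1) q` by `θ_{ij}(J)` gives `1 + (λ - 1)(q - p q)`, and
multiplying this by `μ_q(λ⁻¹)` leaves `1 + (λ⁻¹ - 1) p q = μ_J(λ⁻¹)`.
-/

theorem isIdempotentElem_mul_of_mul_eq_one {M : Type*} [Monoid M] {a b : M} (h : b * a = 1) :
    IsIdempotentElem (a * b) := by
  rw [IsIdempotentElem, mul_assoc, ← mul_assoc b, h, one_mul]

section IdemMu

variable {R : Type*} [Ring R] {a b c d p q x : R}

def idemMu (p a : R) : R := a * p + 1 - p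

theorem idemMu_one (p : R) : idemMu p 1 = 1 := by
  simp [idemMu]

theorem idemMu_mul_idemMu (hp : IsIdempotentElem p) (hb : Commute b p) (a : R) :
    idemMu p a * idemMu p b = idemMu p (a * b) := by
  have hpb : ∀ y, p * (b * y) = b * (p * y) := fun y => by rw [← mul_assoc, ← hb.eq, mul_assoc]
  simp only [idemMu, mul_add, add_mul, mul_sub, sub_mul, mul_one, one_mul, mul_assoc, hp.eq, hpb]
  abel

theorem idemMu_mul_self (hp : IsIdempotentElem p) (a : R) : idemMu p a * p = a * p := by
  simp [idemMu, add_mul, sub_mul, mul_assoc, hp.eq]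

theorem self_mul_idemMu (hp : IsIdempotentElem p) (ha : Commute a p) : p * idemMu p a = a * p := by
  simp [idemMu, mul_add, mul_sub, ← mul_assoc, ha.symm.eq, hp.eq, mul_assoc a p p]

theorem idemMu_mul_mul_idemMu (ha : Commute a p) (hpx : p * x = 0) (hxp : x * p = 0) (b : R) :
    idemMu p b * x * idemMu p a = x := by
  have hxa : x * (a * p) = 0 := by rw [ha.eq, ← mul_assoc, hxp, zero_mul]
  simp [idemMu, mul_add, add_mul, mul_sub, sub_mul, mul_assoc, hpx, hxp, hxa]

theorem idemMu_algebraMap {K : Type*} [CommSemiring K] [Algebra K R] (p : R) (t : K) :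
    idemMu p (algebraMap K R t) = t • p + 1 - p := by
  rw [idemMu, Algebra.algebraMap_eq_smul_one, smul_mul_assoc, one_mul]

/- In the next two lemmas `a, b, c, d, p, q` play the roles of `x_i, y_i, x_j, y_j, e_{J∖i}, e_{J∖j}`,
so that the two `idemMu` products are `θ_{ij}(J)` and `θ_{ji}(J)`. -/

theorem theta_mul_theta_eq_one (hba : b * a = 1) (hp : IsIdempotentElem p)
    (hq : IsIdempotentElem q) (hap : Commute a p) (hbp : Commute b p) (hdq : Commute d q)
    (hbq : b * q = 0) (hpq_eq : p * q = (1 - c * d) * q) :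
    idemMu p b * idemMu q c * (idemMu q d * idemMu p a) = 1 := by
  have hcd : idemMu q c * idemMu q d = 1 - p * q := by
    rw [idemMu_mul_idemMu hq hdq, idemMu, hpq_eq]
    noncomm_ring
  have hbpq : idemMu p b * p * q = 0 := by
    rw [idemMu_mul_self hp, hbp.eq, mul_assoc, hbq, mul_zero]
  calc idemMu p b * idemMu q c * (idemMu q d * idemMu p a)
      = idemMu p b * idemMu p a - idemMu p b * p * q * idemMu p a := by
        rw [← mul_assoc, mul_assoc _ (idemMu q c), hcd]
        noncomm_ring
    _ = 1 := by rw [hbpq, zero_mul, sub_zero, idemMu_mul_idemMu hp hap, hba, idemMu_one]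

theorem theta_mul_mul_theta_eq_sub (hp : IsIdempotentElem p) (hq : IsIdempotentElem q)
    (hpq : Commute p q) (hap : Commute a p) (hdq : Commute d q)
    (hpq_eq : p * q = (1 - c * d) * q) :
    idemMu p b * idemMu q c * q * (idemMu q d * idemMu p a) = q - p * q := by
  have hcqd : idemMu q c * q * idemMu q d = q - p * q := by
    rw [idemMu_mul_self hq, mul_assoc, self_mul_idemMu hq hdq, ← mul_assoc, hpq_eq]
    noncomm_ring
  have hpx : p * (q - p * q) = 0 := by rw [mul_sub, ← mul_assoc, hp.eq, sub_self]
  have hxp : (q - p * q) * p = 0 := by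
    rw [sub_mul, mul_assoc, ← hpq.eq, ← mul_assoc, hp.eq, sub_self]
  calc idemMu p b * idemMu q c * q * (idemMu q d * idemMu p a)
      = idemMu p b * (idemMu q c * q * idemMu q d) * idemMu p a := by noncomm_ring
    _ = q - p * q := by rw [hcqd, idemMu_mul_mul_idemMu hap hpx hxp]

theorem idemMu_algebraMap_commutator {K : Type*} [Field K] [Algebra K R] {θ θ' : R}
    (hθ : θ * θ' = 1) (hq : IsIdempotentElem q) (hpq : p * q = p) (hconj : θ * q * θ' = q - p)
    {t : K} (ht : t ≠ 0) :
    θ * idemMu q (algebraMap K R t) * θ' * idemMu q (algebraMap K R t⁻¹) =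
      idemMu p (algebraMap K R t⁻¹) := by
  have hconj_mu : θ * idemMu q (algebraMap K R t) * θ' = t • (q - p) + 1 - (q - p) := by
    rw [idemMu_algebraMap, ← hconj]
    simp only [mul_add, add_mul, mul_sub, sub_mul, mul_smul_comm, smul_mul_assoc, mul_one, hθ]
  have hq_sub : (q - p) * q = q - p := by rw [sub_mul, hq.eq, hpq]
  rw [hconj_mu, idemMu_algebraMap, idemMu_algebraMap]
  simp only [mul_add, add_mul, mul_sub, sub_mul, mul_smul_comm, smul_mul_assoc, mul_one, one_mul,
    hq_sub]
  match_scalars <;> field_simp <;> ring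

end IdemMu

noncomputable section

variable (K : Type*) [Field K] (n : ℕ)

theorem ext_monomial {f g : Module.End K (Poly K n)}
    (h : ∀ β : Fin n →₀ ℕ, f (monomial β 1) = g (monomial β 1)) : f = g :=
  linearMap_ext fun β => LinearMap.ext_ring (h β)

theorem xop_monomial (i : Fin n) (β : Fin n →₀ ℕ) :
    xop K n i (monomial β 1) = monomial (β + Finsupp.single i 1) 1 := by
  rw [xop, LinearMap.mulLeft_apply, X, monomial_mul, one_mul, add_comm]

theorem yop_monomial (i : Fin n) (β : Fin n →₀ ℕ) :
    yop K n i (monomial β 1) = if β i = 0 then 0 else monomial (β - Finsupp.single i 1) 1 := by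
  simpa [yop, coe_basisMonomials] using (basisMonomials (Fin n) K).constr_basis K
    (fun α => if α i = 0 then 0 else basisMonomials (Fin n) K (α - Finsupp.single i 1)) β

theorem yop_mul_xop (i : Fin n) : yop K n i * xop K n i = 1 :=
  ext_monomial K n fun β => by simp [xop_monomial, yop_monomial]

theorem commute_xop_xop (i j : Fin n) : Commute (xop K n i) (xop K n j) :=
  ext_monomial K n fun β => by simp [xop_monomial, add_right_comm]

theorem commute_xop_yop {i j : Fin n} (h : i ≠ j) : Commute (xop K n i) (yop K n j) :=
  ext_monomial K n fun β => by
    have hj : (β + Finsupp.single i 1 : Fin n →₀ ℕ) j = β j := by simp [h]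
    by_cases hβj : β j = 0
    · simp [xop_monomial, yop_monomial, hβj, hj]
    · have hβ : β - Finsupp.single j 1 + Finsupp.single i 1 =
          β + Finsupp.single i 1 - Finsupp.single j 1 := by
        ext k
        simp only [Finsupp.add_apply, Finsupp.tsub_apply, Finsupp.single_apply]
        split_ifs <;> omega
      simp [xop_monomial, yop_monomial, hβj, hj, hβ]

theorem commute_yop_yop (i j : Fin n) : Commute (yop K n i) (yop K n j) := by
  obtain rfl | h := eq_or_ne i j
  · exact Commute.refl _
  refine ext_monomial K n fun β => ?_
  have hi : (β - Finsupp.single j 1 : Fin n →₀ ℕ) i = β i := by simp [h]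
  have hj : (β - Finsupp.single i 1 : Fin n →₀ ℕ) j = β j := by simp [h.symm]
  by_cases hβi : β i = 0 <;> by_cases hβj : β j = 0 <;>
    simp [yop_monomial, hβi, hβj, hi, hj, tsub_right_comm]

def epsOp (k : Fin n) : Module.End K (Poly K n) := 1 - xop K n k * yop K n k

theorem isIdempotentElem_epsOp (k : Fin n) : IsIdempotentElem (epsOp K n k) :=
  (isIdempotentElem_mul_of_mul_eq_one (yop_mul_xop K n k)).one_sub

theorem yop_mul_epsOp (k : Fin n) : yop K n k * epsOp K n k = 0 := by
  rw [epsOp, mul_sub, mul_one, ← mul_assoc, yop_mul_xop, one_mul, sub_self]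

theorem commute_xop_epsOp {i k : Fin n} (h : i ≠ k) : Commute (xop K n i) (epsOp K n k) :=
  (Commute.one_right _).sub_right ((commute_xop_xop K n i k).mul_right (commute_xop_yop K n h))

theorem commute_yop_epsOp {i k : Fin n} (h : i ≠ k) : Commute (yop K n i) (epsOp K n k) :=
  (Commute.one_right _).sub_right
    ((commute_xop_yop K n h.symm).symm.mul_right (commute_yop_yop K n i k))

theorem commute_epsOp_epsOp (k m : Fin n) : Commute (epsOp K n k) (epsOp K n m) := by
  obtain rfl | h := eq_or_ne k m
  · exact Commute.refl _
  exact (Commute.one_left _).sub_left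
    ((commute_xop_epsOp K n h).mul_left (commute_yop_epsOp K n h))

def eOp (S : Finset (Fin n)) : Module.End K (Poly K n) :=
  S.noncommProd (epsOp K n) fun k _ m _ _ => commute_epsOp_epsOp K n k m

theorem eOp_empty : eOp K n ∅ = 1 := rfl

theorem eOp_insert {k : Fin n} {S : Finset (Fin n)} (hk : k ∉ S) :
    eOp K n (insert k S) = epsOp K n k * eOp K n S :=
  Finset.noncommProd_insert_of_notMem _ _ _ _ hk

theorem epsOp_mul_eOp {k : Fin n} {S : Finset (Fin n)} (hk : k ∈ S) :
    epsOp K n k * eOp K n S = eOp K n S := by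
  rw [← Finset.insert_erase hk, eOp_insert K n (S.notMem_erase k), ← mul_assoc,
    (isIdempotentElem_epsOp K n k).eq]

theorem eOp_mul_eOp (S T : Finset (Fin n)) : eOp K n S * eOp K n T = eOp K n (S ∪ T) := by
  induction S using Finset.induction_on with
  | empty => rw [eOp_empty, one_mul, Finset.empty_union]
  | insert k S hk ih =>
    rw [eOp_insert K n hk, mul_assoc, ih, Finset.insert_union]
    by_cases hkST : k ∈ S ∪ T
    · rw [Finset.insert_eq_of_mem hkST, epsOp_mul_eOp K n hkST]
    · rw [eOp_insert K n hkST]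

theorem isIdempotentElem_eOp (S : Finset (Fin n)) : IsIdempotentElem (eOp K n S) := by
  rw [IsIdempotentElem, eOp_mul_eOp, Finset.union_self]

theorem commute_eOp_eOp (S T : Finset (Fin n)) : Commute (eOp K n S) (eOp K n T) := by
  rw [Commute, SemiconjBy, eOp_mul_eOp, eOp_mul_eOp, Finset.union_comm]

theorem commute_eOp_of_forall {u : Module.End K (Poly K n)} {S : Finset (Fin n)}
    (h : ∀ k ∈ S, Commute u (epsOp K n k)) : Commute u (eOp K n S) :=
  Finset.noncommProd_commute _ _ _ _ h

theorem commute_xop_eOp {i : Fin n} {S : Finset (Fin n)} (hi : i ∉ S) :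
    Commute (xop K n i) (eOp K n S) :=
  commute_eOp_of_forall K n fun _ hk => commute_xop_epsOp K n (ne_of_mem_of_not_mem hk hi).symm

theorem commute_yop_eOp {i : Fin n} {S : Finset (Fin n)} (hi : i ∉ S) :
    Commute (yop K n i) (eOp K n S) :=
  commute_eOp_of_forall K n fun _ hk => commute_yop_epsOp K n (ne_of_mem_of_not_mem hk hi).symm

theorem yop_mul_eOp {k : Fin n} {S : Finset (Fin n)} (hk : k ∈ S) :
    yop K n k * eOp K n S = 0 := by
  rw [← epsOp_mul_eOp K n hk, ← mul_assoc, yop_mul_epsOp, zero_mul]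

@[simp]
theorem coe_Xe (i : Fin n) : (Xe K n i : Module.End K (Poly K n)) = xop K n i := rfl

@[simp]
theorem coe_Ye (i : Fin n) : (Ye K n i : Module.End K (Poly K n)) = yop K n i := rfl

theorem coe_eSet (S : Finset (Fin n)) :
    (eSet K n S : Module.End K (Poly K n)) = eOp K n S := by
  have h := Finset.noncommProd_toFinset (S.sort (· ≤ ·)) (epsOp K n)
    (fun k _ m _ _ => commute_epsOp_epsOp K n k m) (S.sort_nodup _)
  simp only [Finset.sort_toFinset] at h
  rw [eOp, h, eSet, SubmonoidClass.coe_list_prod, List.map_map]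
  rfl

theorem coe_mu (S : Finset (Fin n)) (a : Sn K n) :
    (mu K n S a : Module.End K (Poly K n)) = idemMu (eOp K n S) a := by
  simp [mu, idemMu, coe_eSet]

end

noncomputable section

variable (K : Type*) [Field K] [CharZero K] (n : ℕ)

theorem theta_mu_commutator (J : Finset (Fin n))
    (i j : Fin n) (hi : i ∈ J) (hj : j ∈ J) (hij : i ≠ j) (lam : K) (hlam : lam ≠ 0) :
    theta K n J i j * mu K n (J.erase j) (algebraMap K (Sn K n) lam) *
      theta K n J j i * mu K n (J.erase j) (algebraMap K (Sn K n) lam⁻¹) =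
    mu K n J (algebraMap K (Sn K n) lam⁻¹) := by
  have hi' := J.notMem_erase i
  have hj' := J.notMem_erase j
  have hJ : eOp K n (J.erase i) * eOp K n (J.erase j) = eOp K n J := by
    rw [eOp_mul_eOp]
    congr 1
    ext k
    grind
  have hpq_eq : eOp K n (J.erase i) * eOp K n (J.erase j) = epsOp K n j * eOp K n (J.erase j) := by
    rw [hJ, ← eOp_insert K n hj', Finset.insert_erase hj]
  apply Subtype.val_injective
  simp only [theta, MulMemClass.coe_mul, coe_mu, coe_Xe, coe_Ye, Subalgebra.coe_algebraMap, ← hJ]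
  exact idemMu_algebraMap_commutator
    (theta_mul_theta_eq_one (yop_mul_xop K n i) (isIdempotentElem_eOp K n _)
      (isIdempotentElem_eOp K n _) (commute_xop_eOp K n hi') (commute_yop_eOp K n hi')
      (commute_yop_eOp K n hj') (yop_mul_eOp K n (Finset.mem_erase.2 ⟨hij, hi⟩)) hpq_eq)
    (isIdempotentElem_eOp K n _) (by rw [mul_assoc, (isIdempotentElem_eOp K n _).eq])
    (theta_mul_mul_theta_eq_sub (isIdempotentElem_eOp K n _) (isIdempotentElem_eOp K n _)
      (commute_eOp_eOp K n _ _) (commute_xop_eOp K n hi') (commute_yop_eOp K n hj') hpq_eq)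
    hlam

end

end SnAlg
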